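/- arXiv:1009.4169 — 3 statements merged into one kernel-verified Lean document; each statement's English description precedes it below -/
import Mathlib

section
/- Let d ≥ 2 and let μ be a Frostman probability measure with exponent s > d−1 supported on a set E ⊆ [0,1]^d. Then there exist constants c₁ > 0 and c₂ > 0, Borel subsets E₁, E₂ ⊆ E with μ(E₁) ≥ c₁ and μ(E₂) ≥ c₁, and a coordinate index k ∈ {1, …, d} such that |x_k − y_k| ≥ c₂ for every x ∈ E₁ and every y ∈ E₂. -/
/-!
A slab `{x ∈ [0,1]^d | t ≤ x_k ≤ t + δ}` is covered by about `δ^(1-d)` balls of radius about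
`√d δ`, so by the Frostman condition its mass is `O(δ^(s-(d-1)))`, which is small for small `δ`
because `s > d - 1`. Cut the `k`-th coordinate where its distribution function crosses `1/3`:
the half-spaces `x_k ≤ t` and `x_k > t + δ` then both carry mass at least `1/3`, since the slab
between them carries at most `1/3`.
-/

open MeasureTheory Metric Set Filter Topology
open scoped ENNReal

lemma exists_fin_abs_sub_div_le {m : ℕ} (hm : 0 < m) {u : ℝ} (hu : u ∈ Icc (0 : ℝ) 1) :
    ∃ j : Fin (m + 1), |u - j / m| ≤ 1 / m := by
  have hm' : (0 : ℝ) < m := Nat.cast_pos.mpr hm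
  have hum : 0 ≤ u * m := mul_nonneg hu.1 hm'.le
  refine ⟨⟨⌈u * m⌉₊, Nat.lt_succ_of_le (Nat.ceil_le.mpr ?_)⟩, ?_⟩
  · simpa using mul_le_of_le_one_left hm'.le hu.2
  · have h₁ : u * m ≤ ⌈u * m⌉₊ := Nat.le_ceil _
    have h₂ : (⌈u * m⌉₊ : ℝ) < u * m + 1 := Nat.ceil_lt_add_one hum
    rw [show u - ⌈u * m⌉₊ / m = (u * m - ⌈u * m⌉₊) / m by field_simp, abs_div, abs_of_pos hm']
    gcongr
    exact abs_le.mpr ⟨by linarith, by linarith⟩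

lemma EuclideanSpace.dist_le_sqrt_card_mul {ι : Type*} [Fintype ι] {x y : EuclideanSpace ℝ ι}
    {r : ℝ} (h : ∀ i, |x i - y i| ≤ r) : dist x y ≤ √(Fintype.card ι) * r := by
  rcases isEmpty_or_nonempty ι with hι | ⟨⟨i₀⟩⟩
  · simp [EuclideanSpace.dist_eq]
  have hr : 0 ≤ r := (abs_nonneg _).trans (h i₀)
  calc dist x y = √(∑ i, dist (x i) (y i) ^ 2) := EuclideanSpace.dist_eq x y
    _ ≤ √(∑ _i : ι, r ^ 2) := by
      gcongr with i
      exact (Real.dist_eq _ _).trans_le (h i)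
    _ = √(Fintype.card ι) * r := by
      rw [Finset.sum_const, Finset.card_univ, nsmul_eq_mul, Real.sqrt_mul (Nat.cast_nonneg _),
        Real.sqrt_sq hr]

noncomputable def slabGridPoint {d m : ℕ} (k : Fin d) (t : ℝ) (f : {i // i ≠ k} → Fin (m + 1)) :
    EuclideanSpace ℝ (Fin d) :=
  WithLp.toLp 2 fun i => if h : i = k then t else (f ⟨i, h⟩ : ℝ) / m

lemma cube_inter_slab_subset_iUnion_ball {d m : ℕ} (hm : 0 < m) (k : Fin d) (t : ℝ) :
    {x : EuclideanSpace ℝ (Fin d) | ∀ i, x i ∈ Icc (0 : ℝ) 1} ∩ {x | x k ∈ Icc t (t + 1 / m)} ⊆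
      ⋃ f : {i // i ≠ k} → Fin (m + 1), ball (slabGridPoint k t f) (2 * √d / m) := by
  rintro x ⟨hx, hxk⟩
  choose f hf using fun i : {i // i ≠ k} => exists_fin_abs_sub_div_le hm (hx i)
  refine mem_iUnion.mpr ⟨f, mem_ball.mpr ?_⟩
  have hcoord : ∀ i, |x i - slabGridPoint k t f i| ≤ 1 / m := by
    intro i
    by_cases hi : i = k
    · subst hi
      simp only [slabGridPoint, PiLp.toLp_apply, dite_true, abs_le]
      constructor <;> linarith [hxk.1, hxk.2]
    · simpa [slabGridPoint, hi] using hf ⟨i, hi⟩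
  have hd : (0 : ℝ) < √d := Real.sqrt_pos.mpr (Nat.cast_pos.mpr (Fin.pos k))
  calc dist x (slabGridPoint k t f) ≤ √d * (1 / m) := by
        simpa using EuclideanSpace.dist_le_sqrt_card_mul hcoord
    _ < 2 * √d / m := by
        rw [mul_one_div]
        gcongr
        linarith

lemma measure_inter_slab_le {d : ℕ} {E : Set (EuclideanSpace ℝ (Fin d))}
    (hE : E ⊆ {x | ∀ i, x i ∈ Icc (0 : ℝ) 1}) {μ : Measure (EuclideanSpace ℝ (Fin d))} {C₀ s : ℝ}
    (hfrost : ∀ x r, 0 < r → μ (ball x r) ≤ ENNReal.ofReal (C₀ * r ^ s))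
    {m : ℕ} (hm : 0 < m) (k : Fin d) (t : ℝ) :
    μ (E ∩ {x | x k ∈ Icc t (t + 1 / m)}) ≤
      ENNReal.ofReal ((m + 1) ^ (d - 1) * (C₀ * (2 * √d / m) ^ s)) := by
  have hr : 0 < 2 * √d / m :=
    div_pos (mul_pos two_pos (Real.sqrt_pos.mpr (Nat.cast_pos.mpr (Fin.pos k))))
      (Nat.cast_pos.mpr hm)
  calc μ (E ∩ {x | x k ∈ Icc t (t + 1 / m)})
      ≤ μ (⋃ f : {i // i ≠ k} → Fin (m + 1), ball (slabGridPoint k t f) (2 * √d / m)) :=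
        measure_mono ((inter_subset_inter_left _ hE).trans
          (cube_inter_slab_subset_iUnion_ball hm k t))
    _ ≤ ∑ f : {i // i ≠ k} → Fin (m + 1), μ (ball (slabGridPoint k t f) (2 * √d / m)) :=
        measure_iUnion_fintype_le μ _
    _ ≤ ∑ _f : {i // i ≠ k} → Fin (m + 1), ENNReal.ofReal (C₀ * (2 * √d / m) ^ s) :=
        Finset.sum_le_sum fun f _ => hfrost _ _ hr
    _ = ENNReal.ofReal ((m + 1) ^ (d - 1) * (C₀ * (2 * √d / m) ^ s)) := by
        rw [Finset.sum_const, Finset.card_univ, Fintype.card_fun, Fintype.card_subtype_compl,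
          Fintype.card_subtype_eq, Fintype.card_fin, Fintype.card_fin, nsmul_eq_mul,
          ← ENNReal.ofReal_natCast, ← ENNReal.ofReal_mul (Nat.cast_nonneg _)]
        push_cast
        rfl

lemma tendsto_succ_pow_mul_rpow_neg {n : ℕ} {s : ℝ} (hs : (n : ℝ) < s) :
    Tendsto (fun m : ℕ => ((m : ℝ) + 1) ^ n * (m : ℝ) ^ (-s)) atTop (𝓝 0) := by
  have hlim : Tendsto (fun m : ℕ => 2 ^ n * (m : ℝ) ^ (-(s - n))) atTop (𝓝 0) := by
    simpa using ((tendsto_rpow_neg_atTop (sub_pos.mpr hs)).comp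
      tendsto_natCast_atTop_atTop).const_mul (2 ^ n)
  refine squeeze_zero' (Eventually.of_forall fun m => by positivity) ?_ hlim
  filter_upwards [eventually_ge_atTop 1] with m hm
  have hm' : (1 : ℝ) ≤ m := Nat.one_le_cast.mpr hm
  calc ((m : ℝ) + 1) ^ n * (m : ℝ) ^ (-s) ≤ (2 * m) ^ n * (m : ℝ) ^ (-s) := by
        gcongr
        linarith
    _ = 2 ^ n * (m : ℝ) ^ (-(s - n)) := by
        rw [mul_pow, mul_assoc, neg_sub, Real.rpow_sub (by positivity), Real.rpow_natCast,
          Real.rpow_neg (by positivity), div_eq_mul_inv]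

lemma tendsto_succ_pow_mul_div_rpow {n : ℕ} {s a : ℝ} (hs : (n : ℝ) < s) (ha : 0 ≤ a) (C : ℝ) :
    Tendsto (fun m : ℕ => ((m : ℝ) + 1) ^ n * (C * (a / m) ^ s)) atTop (𝓝 0) := by
  have h := (tendsto_succ_pow_mul_rpow_neg hs).const_mul (C * a ^ s)
  rw [mul_zero] at h
  refine h.congr fun m => ?_
  rw [Real.div_rpow ha (Nat.cast_nonneg m), div_eq_mul_inv, ← Real.rpow_neg (Nat.cast_nonneg m)]
  ring

lemma exists_pos_measure_inter_slab_le {d : ℕ} {E : Set (EuclideanSpace ℝ (Fin d))}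
    (hE : E ⊆ {x | ∀ i, x i ∈ Icc (0 : ℝ) 1}) {μ : Measure (EuclideanSpace ℝ (Fin d))} {C₀ s : ℝ}
    (hfrost : ∀ x r, 0 < r → μ (ball x r) ≤ ENNReal.ofReal (C₀ * r ^ s))
    (hs : ((d - 1 : ℕ) : ℝ) < s) {ε : ℝ} (hε : 0 < ε) :
    ∃ δ > 0, ∀ k t, μ (E ∩ {x | x k ∈ Icc t (t + δ)}) ≤ ENNReal.ofReal ε := by
  obtain ⟨m, hmε, hm⟩ := (((tendsto_succ_pow_mul_div_rpow hs (by positivity : 0 ≤ 2 * √d) C₀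
    ).eventually (gt_mem_nhds hε)).and (eventually_gt_atTop 0)).exists
  exact ⟨1 / m, by positivity, fun k t =>
    (measure_inter_slab_le hE hfrost hm k t).trans (ENNReal.ofReal_le_ofReal hmε.le)⟩

lemma exists_measure_Iic_ge_and_measure_Iic_add_le (ν : Measure ℝ) {a b δ : ℝ} {q ε : ℝ≥0∞}
    (hδ : 0 < δ) (ha : ν (Iic a) < q) (hb : q ≤ ν (Iic b))
    (hε : ∀ t, ν (Ioc t (t + 2 * δ)) ≤ ε) :
    ∃ t, q ≤ ν (Iic t) ∧ ν (Iic (t + δ)) ≤ q + ε := by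
  obtain ⟨N, hN⟩ := exists_nat_ge ((b - a) / δ)
  have hbN : q ≤ ν (Iic (a + N * δ)) :=
    hb.trans (measure_mono (Iic_subset_Iic.mpr (by linarith [(div_le_iff₀ hδ).mp hN])))
  -- the first point of the grid `a + nδ` at which `ν (Iic ·)` reaches `q`
  obtain ⟨n, hn, hn₁⟩ := Nat.exists_not_and_succ_of_not_zero_of_exists
    (p := fun n : ℕ => q ≤ ν (Iic (a + n * δ))) (by simpa using ha) ⟨N, hbN⟩
  refine ⟨a + (n + 1 : ℕ) * δ, hn₁, ?_⟩
  have hsplit : Iic (a + (n + 1 : ℕ) * δ + δ) =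
      Iic (a + n * δ) ∪ Ioc (a + n * δ) (a + n * δ + 2 * δ) := by
    rw [Iic_union_Ioc_eq_Iic (by linarith)]
    push_cast
    ring_nf
  calc ν (Iic (a + (n + 1 : ℕ) * δ + δ))
      ≤ ν (Iic (a + n * δ)) + ν (Ioc (a + n * δ) (a + n * δ + 2 * δ)) := by
        rw [hsplit]
        exact measure_union_le _ _
    _ ≤ q + ε := add_le_add (not_le.mp hn).le (hε _)

lemma exists_measure_Iic_ge_and_measure_Ioi_add_ge (ν : Measure ℝ) [IsProbabilityMeasure ν]
    {a δ : ℝ} (hδ : 0 < δ) (ha : ν (Iic a) < 3⁻¹) (hε : ∀ t, ν (Ioc t (t + 2 * δ)) ≤ 3⁻¹) :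
    ∃ t, 3⁻¹ ≤ ν (Iic t) ∧ 3⁻¹ ≤ ν (Ioi (t + δ)) := by
  have h_lt_univ : (3⁻¹ : ℝ≥0∞) < ν univ := by
    rw [measure_univ]
    exact ENNReal.inv_lt_one.mpr (by norm_num)
  obtain ⟨b, hb⟩ := ((tendsto_measure_Iic_atTop ν).eventually (lt_mem_nhds h_lt_univ)).exists
  obtain ⟨t, hνt, hνtδ⟩ := exists_measure_Iic_ge_and_measure_Iic_add_le ν hδ ha hb.le hε
  refine ⟨t, hνt, ?_⟩
  calc (3⁻¹ : ℝ≥0∞) = 1 - (3⁻¹ + 3⁻¹) :=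
        (ENNReal.sub_eq_of_eq_add_rev (by simp) ENNReal.inv_three_add_inv_three.symm).symm
    _ ≤ 1 - ν (Iic (t + δ)) := tsub_le_tsub_left hνtδ 1
    _ = ν (Ioi (t + δ)) := by rw [← compl_Iic, prob_compl_eq_one_sub measurableSet_Iic]

lemma exists_measure_coord_le_ge_and_measure_coord_gt_ge {d : ℕ}
    {E : Set (EuclideanSpace ℝ (Fin d))} (hE : E ⊆ {x | ∀ i, x i ∈ Icc (0 : ℝ) 1})
    {μ : Measure (EuclideanSpace ℝ (Fin d))} [IsProbabilityMeasure μ] (hsupp : μ Eᶜ = 0)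
    (k : Fin d) {δ : ℝ} (hδ : 0 < δ)
    (hslab : ∀ t, μ (E ∩ {x | x k ∈ Icc t (t + 2 * δ)}) ≤ 3⁻¹) :
    ∃ t, 3⁻¹ ≤ μ {x | x k ≤ t} ∧ 3⁻¹ ≤ μ {x | t + δ < x k} := by
  have hk : Measurable fun x : EuclideanSpace ℝ (Fin d) => x k := by fun_prop
  set ν : Measure ℝ := μ.map fun x => x k
  have : IsProbabilityMeasure ν := Measure.isProbabilityMeasure_map hk.aemeasurable
  have hν : ∀ {I : Set ℝ}, MeasurableSet I → ν I = μ {x | x k ∈ I} := Measure.map_apply hk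
  have hν_neg : ν (Iic (-1)) < 3⁻¹ := by
    rw [hν measurableSet_Iic, measure_mono_null (fun x hx hxE => ?_) hsupp]
    · norm_num
    · linarith [(hE hxE k).1, show x k ≤ -1 from hx]
  have hν_slab : ∀ t, ν (Ioc t (t + 2 * δ)) ≤ 3⁻¹ := fun t => by
    rw [hν measurableSet_Ioc, ← measure_inter_conull hsupp, inter_comm]
    exact (measure_mono (inter_subset_inter_right E (preimage_mono Ioc_subset_Icc_self))).trans
      (hslab t)
  obtain ⟨t, hνt, hνtδ⟩ := exists_measure_Iic_ge_and_measure_Ioi_add_ge ν hδ hν_neg hν_slab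
  exact ⟨t, hνt.trans_eq (hν measurableSet_Iic), hνtδ.trans_eq (hν measurableSet_Ioi)⟩

theorem two_separated_pieces_general (d : ℕ) (hd : 2 ≤ d) (s : ℝ) (hs : (d : ℝ) - 1 < s)
    (E : Set (EuclideanSpace ℝ (Fin d)))
    (hE : E ⊆ {x : EuclideanSpace ℝ (Fin d) | ∀ i, x i ∈ Set.Icc (0 : ℝ) 1})
    (μ : Measure (EuclideanSpace ℝ (Fin d))) [IsProbabilityMeasure μ]
    (hsupp : μ Eᶜ = 0)
    (C₀ : ℝ)
    (hfrost : ∀ (x : EuclideanSpace ℝ (Fin d)) (r : ℝ), 0 < r →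
      μ (ball x r) ≤ ENNReal.ofReal (C₀ * r ^ s)) :
    ∃ (c₁ c₂ : ℝ), 0 < c₁ ∧ 0 < c₂ ∧
      ∃ (E₁ E₂ : Set (EuclideanSpace ℝ (Fin d))),
        MeasurableSet E₁ ∧ MeasurableSet E₂ ∧ E₁ ⊆ E ∧ E₂ ⊆ E ∧
        ENNReal.ofReal c₁ ≤ μ E₁ ∧ ENNReal.ofReal c₁ ≤ μ E₂ ∧
        ∃ k : Fin d, ∀ x ∈ E₁, ∀ y ∈ E₂, c₂ ≤ |x k - y k| := by
  obtain ⟨k⟩ : Nonempty (Fin d) := ⟨⟨0, by omega⟩⟩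
  have hs' : ((d - 1 : ℕ) : ℝ) < s := by rwa [Nat.cast_sub (by omega), Nat.cast_one]
  have hthird : ENNReal.ofReal 3⁻¹ = 3⁻¹ := by
    rw [ENNReal.ofReal_inv_of_pos three_pos, ENNReal.ofReal_ofNat]
  obtain ⟨δ, hδ, hslab⟩ :=
    exists_pos_measure_inter_slab_le hE hfrost hs' (by norm_num : (0 : ℝ) < 3⁻¹)
  obtain ⟨t, hE₁, hE₂⟩ := exists_measure_coord_le_ge_and_measure_coord_gt_ge hE hsupp k
    (half_pos hδ) fun t => by rw [mul_div_cancel₀ _ two_ne_zero, ← hthird]; exact hslab k t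
  obtain ⟨S, hS, hSmeas, hSE⟩ := (ae_iff.mpr hsupp).exists_measurable_mem
  have hk : Measurable fun x : EuclideanSpace ℝ (Fin d) => x k := by fun_prop
  refine ⟨3⁻¹, δ / 2, by norm_num, half_pos hδ, {x | x k ≤ t} ∩ S, {x | t + δ / 2 < x k} ∩ S,
    (measurableSet_le hk measurable_const).inter hSmeas,
    (measurableSet_lt measurable_const hk).inter hSmeas,
    fun x hx => hSE x hx.2, fun x hx => hSE x hx.2, ?_, ?_, k, fun x hx y hy => ?_⟩
  · rwa [measure_inter_conull (mem_ae_iff.mp hS), hthird]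
  · rwa [measure_inter_conull (mem_ae_iff.mp hS), hthird]
  · rw [abs_sub_comm]
    exact le_abs.mpr (Or.inl (by linarith [show x k ≤ t from hx.1, show t + δ / 2 < y k from hy.1]))

theorem two_separated_pieces (d : ℕ) (hd : 2 ≤ d) (s : ℝ) (hs : (d : ℝ) - 1 < s)
    (E : Set (EuclideanSpace ℝ (Fin d)))
    (hE : E ⊆ {x : EuclideanSpace ℝ (Fin d) | ∀ i, x i ∈ Set.Icc (0 : ℝ) 1})
    (μ : Measure (EuclideanSpace ℝ (Fin d))) [IsProbabilityMeasure μ]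
    (hsupp : μ Eᶜ = 0)
    (C₀ : ℝ) (hC₀ : 0 < C₀)
    (hfrost : ∀ (x : EuclideanSpace ℝ (Fin d)) (r : ℝ), 0 < r →
      μ (ball x r) ≤ ENNReal.ofReal (C₀ * r ^ s)) :
    ∃ (c₁ c₂ : ℝ), 0 < c₁ ∧ 0 < c₂ ∧
      ∃ (E₁ E₂ : Set (EuclideanSpace ℝ (Fin d))),
        MeasurableSet E₁ ∧ MeasurableSet E₂ ∧ E₁ ⊆ E ∧ E₂ ⊆ E ∧
        ENNReal.ofReal c₁ ≤ μ E₁ ∧ ENNReal.ofReal c₁ ≤ μ E₂ ∧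
        ∃ k : Fin d, ∀ x ∈ E₁, ∀ y ∈ E₂, c₂ ≤ |x k - y k| :=
  two_separated_pieces_general d hd s hs E hE μ hsupp C₀ hfrost
end

section
/- Let d ≥ 2, s > d−1, and K > 0. There exists a constant c > 0, depending only on d, s, and K, such that the following holds: if n ≥ 2 and P ⊆ [0,1]^d is a set of n points that is n^{−1/s}-separated and satisfies the discrete energy bound n^{−2} Σ_{p ≠ p' ∈ P} ‖p − p'‖^{−s} ≤ K, then the number of distinct directions satisfies #𝒟(P) ≥ c · n^{(d−1)/s}. -/
open MeasureTheory Metric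
open scoped Classical

def directionSet {d : ℕ} (A : Set (EuclideanSpace ℝ (Fin d))) :
    Set (EuclideanSpace ℝ (Fin d)) :=
  {ω | ∃ x ∈ A, ∃ y ∈ A, x ≠ y ∧ ω = ‖x - y‖⁻¹ • (x - y)}

/-!
Fix a direction `ω` of `P`. The points of `P` split into lines parallel to `ω`, and a line
through `k` points of a set of diameter `L` carries `s`-energy at least `(k - 1)^{1+s} / L^s`
(Hölder on its consecutive gaps). Hölder once more bounds the number `Q(ω)` of ordered pairs of
`P` parallel to `ω` by `Q(ω)^s ≤ (2L)^s E(ω) n^{s-1}`, where `E(ω)` is the energy of those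
pairs. Every pair of `P` is parallel to one of the directions of `P` and to at most two of them,
so `∑_ω Q(ω) ≥ n(n - 1)` and `∑_ω E(ω) ≤ 2Kn²`. The power-mean inequality over the `#𝒟(P)`
directions then yields `n^{s-1} ≲ #𝒟(P)^{s-1}`, i.e. `#𝒟(P) ≳ n ≥ n^{(d-1)/s}`.
-/

open Finset Real
open scoped RealInnerProductSpace

lemma inner_rpow_le_weight_mul_Lp_of_nonneg {ι : Type*} (S : Finset ι) {p : ℝ} (hp : 1 ≤ p)
    {w f : ι → ℝ} (hw : ∀ i, 0 ≤ w i) (hf : ∀ i, 0 ≤ f i) :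
    (∑ i ∈ S, w i * f i) ^ p ≤ (∑ i ∈ S, w i) ^ (p - 1) * ∑ i ∈ S, w i * f i ^ p := by
  have hW : 0 ≤ ∑ i ∈ S, w i := sum_nonneg fun i _ => hw i
  have hF : 0 ≤ ∑ i ∈ S, w i * f i ^ p :=
    sum_nonneg fun i _ => mul_nonneg (hw i) (rpow_nonneg (hf i) _)
  have hp0 : p ≠ 0 := by positivity
  calc _ ≤ ((∑ i ∈ S, w i) ^ (1 - p⁻¹) * (∑ i ∈ S, w i * f i ^ p) ^ p⁻¹) ^ p :=
        rpow_le_rpow (sum_nonneg fun i _ => mul_nonneg (hw i) (hf i))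
          (inner_le_weight_mul_Lp_of_nonneg S hp w f hw hf) (by linarith)
    _ = _ := by
        rw [mul_rpow (rpow_nonneg hW _) (rpow_nonneg hF _), ← rpow_mul hW, ← rpow_mul hF,
          inv_mul_cancel₀ hp0, rpow_one, sub_mul, one_mul, inv_mul_cancel₀ hp0]

section Energy

variable {E : Type*} [SeminormedAddCommGroup E]

noncomputable def pairEnergy (s : ℝ) (A : Finset (E × E)) : ℝ :=
  ∑ x ∈ A, ‖x.1 - x.2‖ ^ (-s)

lemma pairEnergy_nonneg (s : ℝ) (A : Finset (E × E)) : 0 ≤ pairEnergy s A :=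
  sum_nonneg fun _ _ => rpow_nonneg (norm_nonneg _) _

lemma pairEnergy_mono (s : ℝ) {A B : Finset (E × E)} (h : A ⊆ B) :
    pairEnergy s A ≤ pairEnergy s B :=
  sum_le_sum_of_subset_of_nonneg h fun _ _ _ => rpow_nonneg (norm_nonneg _) _

end Energy

lemma mul_inv_rpow_one_add {x : ℝ} (hx : 0 < x) (s : ℝ) : x * x⁻¹ ^ (1 + s) = x ^ (-s) := by
  rw [inv_rpow hx.le, rpow_add hx, rpow_one, rpow_neg hx.le]
  field_simp

theorem card_sub_one_rpow_le_pairEnergy_offDiag_real {s L : ℝ} (hs : 0 < s) (T : Finset ℝ)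
    (hT : ∀ t ∈ T, ∀ t' ∈ T, ‖t - t'‖ ≤ L) :
    ((#T - 1 : ℕ) : ℝ) ^ (1 + s) ≤ L ^ s * pairEnergy s T.offDiag := by
  obtain hT1 | ⟨m, hm⟩ : #T ≤ 1 ∨ ∃ m, #T = m + 2 := by
    rcases le_or_gt #T 1 with h | h
    · exact Or.inl h
    · exact Or.inr ⟨#T - 2, by omega⟩
  · have hoff : T.offDiag = ∅ := by
      rw [← card_eq_zero, offDiag_card]
      interval_cases #T <;> rfl
    rw [Nat.sub_eq_zero_of_le hT1, hoff, pairEnergy, sum_empty, mul_zero, Nat.cast_zero,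
      zero_rpow (by positivity)]
  set e := T.orderEmbOfFin hm
  set g : Fin (m + 1) → ℝ := fun i => e i.succ - e i.castSucc
  have hg : ∀ i, 0 < g i := fun i => sub_pos.2 (e.strictMono Fin.castSucc_lt_succ)
  have hsum : ∑ i, g i ≤ L := by
    rw [← Iic_top, Fin.sum_Iic_sub]
    exact (le_abs_self _).trans (hT _ (T.orderEmbOfFin_mem hm _) _ (T.orderEmbOfFin_mem hm _))
  have hgaps : ∑ i, g i ^ (-s) ≤ pairEnergy s T.offDiag := by
    set step : Fin (m + 1) → ℝ × ℝ := fun i => (e i.succ, e i.castSucc)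
    have hinj : Set.InjOn step (univ : Finset (Fin (m + 1))) :=
      fun i _ j _ h => Fin.succ_injective _ (e.injective (Prod.ext_iff.1 h).1)
    calc ∑ i, g i ^ (-s) = pairEnergy s (univ.image step) := by
          rw [pairEnergy, sum_image hinj]
          exact sum_congr rfl fun i _ => by rw [Real.norm_eq_abs, abs_of_pos (hg i)]
      _ ≤ pairEnergy s T.offDiag := by
          refine pairEnergy_mono s fun x hx => ?_
          obtain ⟨i, -, rfl⟩ := mem_image.1 hx
          exact mem_offDiag.2 ⟨T.orderEmbOfFin_mem hm _, T.orderEmbOfFin_mem hm _,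
            e.injective.ne Fin.castSucc_lt_succ.ne'⟩
  have holder := inner_rpow_le_weight_mul_Lp_of_nonneg univ (by linarith : 1 ≤ 1 + s)
    (fun i => (hg i).le) (fun i => inv_nonneg.2 (hg i).le)
  simp only [mul_inv_cancel₀ (hg _).ne', mul_inv_rpow_one_add (hg _), sum_const, card_univ,
    Fintype.card_fin, nsmul_eq_mul, mul_one, add_sub_cancel_left] at holder
  have hg0 : 0 ≤ ∑ i, g i := sum_nonneg fun i _ => (hg i).le
  have hLs : (∑ i, g i) ^ s ≤ L ^ s := rpow_le_rpow hg0 hsum hs.le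
  calc ((#T - 1 : ℕ) : ℝ) ^ (1 + s) = ((m + 1 : ℕ) : ℝ) ^ (1 + s) := by rw [hm]; rfl
    _ ≤ (∑ i, g i) ^ s * ∑ i, g i ^ (-s) := by exact_mod_cast holder
    _ ≤ L ^ s * pairEnergy s T.offDiag := mul_le_mul hLs hgaps
          (sum_nonneg fun i _ => (rpow_pos_of_pos (hg i) _).le) ((rpow_nonneg hg0 _).trans hLs)

lemma card_image_eq_and_pairEnergy_offDiag_image_eq {E F : Type*} [NormedAddCommGroup E]
    [SeminormedAddCommGroup F] (s : ℝ) {S : Finset E} {φ : E → F}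
    (hφ : ∀ p ∈ S, ∀ q ∈ S, ‖φ p - φ q‖ = ‖p - q‖) :
    #(S.image φ) = #S ∧ pairEnergy s (S.image φ).offDiag = pairEnergy s S.offDiag := by
  have hinj : Set.InjOn φ S := fun p hp q hq h => by
    simpa [h, eq_comm (a := (0 : ℝ)), sub_eq_zero] using hφ p hp q hq
  have hoff : (S.image φ).offDiag = S.offDiag.image (Prod.map φ φ) := by
    ext ⟨a, b⟩
    simp only [mem_offDiag, mem_image, Prod.exists, Prod.map, Prod.mk.injEq]
    constructor
    · rintro ⟨⟨p, hp, rfl⟩, ⟨q, hq, rfl⟩, hne⟩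
      exact ⟨p, q, ⟨hp, hq, fun h => hne (h ▸ rfl)⟩, rfl, rfl⟩
    · rintro ⟨p, q, ⟨hp, hq, hne⟩, rfl, rfl⟩
      exact ⟨⟨p, hp, rfl⟩, ⟨q, hq, rfl⟩, fun h => hne (hinj hp hq h)⟩
  refine ⟨card_image_of_injOn hinj, ?_⟩
  rw [hoff, pairEnergy, sum_image fun x hx y hy h => ?_]
  · exact sum_congr rfl fun x hx => by
      rw [Prod.map_fst, Prod.map_snd, hφ _ (mem_offDiag.1 hx).1 _ (mem_offDiag.1 hx).2.1]
  · have hx' := mem_offDiag.1 hx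
    have hy' := mem_offDiag.1 hy
    exact Prod.ext (hinj hx'.1 hy'.1 (congrArg Prod.fst h))
      (hinj hx'.2.1 hy'.2.1 (congrArg Prod.snd h))

lemma sum_filter_offDiag_eq_sum_offDiag_fiber {α β M : Type*} [AddCommMonoid M] (P : Finset α)
    (κ : α → β) (f : α × α → M) :
    ∑ x ∈ P.offDiag with κ x.1 = κ x.2, f x =
      ∑ b ∈ P.image κ, ∑ x ∈ {a ∈ P | κ a = b}.offDiag, f x := by
  rw [← sum_fiberwise_of_maps_to (g := fun x => κ x.1) (t := P.image κ)
    fun x hx => mem_image_of_mem κ (mem_offDiag.1 (mem_filter.1 hx).1).1]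
  refine sum_congr rfl fun b _ => sum_congr ?_ fun _ _ => rfl
  ext ⟨p, q⟩
  simp only [mem_filter, mem_offDiag]
  constructor
  · rintro ⟨⟨⟨hp, hq, hne⟩, hκ⟩, rfl⟩
    exact ⟨⟨hp, rfl⟩, ⟨hq, hκ.symm⟩, hne⟩
  · rintro ⟨⟨hp, rfl⟩, ⟨hq, hκ⟩, hne⟩
    exact ⟨⟨⟨hp, hq, hne⟩, hκ.symm⟩, rfl⟩

section Lines

variable {E : Type*} [NormedAddCommGroup E] [InnerProductSpace ℝ E]

noncomputable def perpComponent (ω x : E) : E := x - ⟪x, ω⟫ • ω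

noncomputable def pairDirection (x : E × E) : E := ‖x.1 - x.2‖⁻¹ • (x.1 - x.2)

lemma perpComponent_eq_iff {ω p q : E} :
    perpComponent ω p = perpComponent ω q ↔ p - q = (⟪p, ω⟫ - ⟪q, ω⟫) • ω := by
  rw [perpComponent, perpComponent, sub_eq_sub_iff_sub_eq_sub, sub_smul]

lemma norm_sub_eq_of_perpComponent_eq {ω p q : E} (hω : ‖ω‖ = 1)
    (h : perpComponent ω p = perpComponent ω q) : ‖p - q‖ = ‖⟪p, ω⟫ - ⟪q, ω⟫‖ := by
  rw [perpComponent_eq_iff.1 h, norm_smul, hω, mul_one]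

lemma perpComponent_pairDirection (x : E × E) :
    perpComponent (pairDirection x) x.1 = perpComponent (pairDirection x) x.2 := by
  rw [perpComponent_eq_iff, ← inner_sub_left, pairDirection, real_inner_smul_right,
    real_inner_self_eq_norm_mul_norm, smul_smul]
  rcases eq_or_ne ‖x.1 - x.2‖ 0 with h | h
  · rw [norm_eq_zero.1 h, smul_zero]
  · rw [← mul_assoc, inv_mul_cancel₀ h, one_mul, mul_inv_cancel₀ h, one_smul]

lemma norm_pairDirection {x : E × E} (h : x.1 ≠ x.2) : ‖pairDirection x‖ = 1 := by
  simpa [pairDirection] using norm_smul_inv_norm (𝕜 := ℝ) (sub_ne_zero.2 h)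

lemma pairDirection_eq_of_sub_eq_smul {x : E × E} {ω : E} {t : ℝ} (hω : ‖ω‖ = 1) (ht : 0 < t)
    (h : x.1 - x.2 = t • ω) : pairDirection x = ω := by
  rw [pairDirection, h, norm_smul, hω, mul_one, Real.norm_of_nonneg ht.le, smul_smul,
    inv_mul_cancel₀ ht.ne', one_smul]

lemma eq_pairDirection_or_eq_pairDirection_swap {ω : E} {x : E × E} (hω : ‖ω‖ = 1)
    (hne : x.1 ≠ x.2) (h : perpComponent ω x.1 = perpComponent ω x.2) :
    ω = pairDirection x ∨ ω = pairDirection x.swap := by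
  have hsub := perpComponent_eq_iff.1 h
  set t := ⟪x.1, ω⟫ - ⟪x.2, ω⟫
  rcases lt_trichotomy t 0 with ht | ht | ht
  · refine Or.inr (pairDirection_eq_of_sub_eq_smul hω (neg_pos.2 ht) ?_).symm
    rw [Prod.fst_swap, Prod.snd_swap, ← neg_sub, hsub, neg_smul]
  · exact absurd (by rw [hsub, ht, zero_smul]) (sub_ne_zero.2 hne)
  · exact Or.inl (pairDirection_eq_of_sub_eq_smul hω ht hsub).symm

theorem card_sub_one_rpow_le_pairEnergy_offDiag_of_perpComponent_eq {s L : ℝ} (hs : 0 < s)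
    {ω : E} (hω : ‖ω‖ = 1) {F : Finset E}
    (hline : ∀ p ∈ F, ∀ q ∈ F, perpComponent ω p = perpComponent ω q)
    (hdiam : ∀ p ∈ F, ∀ q ∈ F, ‖p - q‖ ≤ L) :
    ((#F - 1 : ℕ) : ℝ) ^ (1 + s) ≤ L ^ s * pairEnergy s F.offDiag := by
  have hiso : ∀ p ∈ F, ∀ q ∈ F, ‖⟪p, ω⟫ - ⟪q, ω⟫‖ = ‖p - q‖ := fun p hp q hq =>
    (norm_sub_eq_of_perpComponent_eq hω (hline p hp q hq)).symm
  obtain ⟨hcard, henergy⟩ := card_image_eq_and_pairEnergy_offDiag_image_eq s hiso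
  rw [← hcard, ← henergy]
  refine card_sub_one_rpow_le_pairEnergy_offDiag_real hs _ ?_
  simp only [mem_image]
  rintro _ ⟨p, hp, rfl⟩ _ ⟨q, hq, rfl⟩
  exact (hiso p hp q hq).trans_le (hdiam p hp q hq)

end Lines

lemma sum_mul_sub_one_rpow_le {β : Type*} (B : Finset β) (k : β → ℕ) (e : β → ℝ) {s C : ℝ}
    (hs : 1 ≤ s) (hk : ∀ b ∈ B, ((k b - 1 : ℕ) : ℝ) ^ (1 + s) ≤ C * e b) :
    ((∑ b ∈ B, k b * (k b - 1) : ℕ) : ℝ) ^ s ≤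
      2 ^ s * C * (∑ b ∈ B, e b) * ((∑ b ∈ B, k b : ℕ) : ℝ) ^ (s - 1) := by
  set a : β → ℝ := fun b => ((k b - 1 : ℕ) : ℝ)
  have ha : ∀ b, 0 ≤ a b := fun b => Nat.cast_nonneg _
  have hpairs : ((∑ b ∈ B, k b * (k b - 1) : ℕ) : ℝ) ≤ 2 * ∑ b ∈ B, a b * a b := by
    rw [mul_sum, Nat.cast_sum]
    refine sum_le_sum fun b _ => ?_
    have : k b * (k b - 1) ≤ 2 * ((k b - 1) * (k b - 1)) := by
      rcases k b with _ | _ | j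
      · simp
      · simp
      · simp only [Nat.add_sub_cancel]; nlinarith
    calc ((k b * (k b - 1) : ℕ) : ℝ) ≤ ((2 * ((k b - 1) * (k b - 1)) : ℕ) : ℝ) :=
          Nat.cast_le.2 this
      _ = 2 * (a b * a b) := by simp only [Nat.cast_mul, Nat.cast_ofNat, a]
  have hsum : ∑ b ∈ B, a b ≤ ((∑ b ∈ B, k b : ℕ) : ℝ) := by
    rw [Nat.cast_sum]
    exact sum_le_sum fun b _ => Nat.cast_le.2 (Nat.sub_le _ _)
  have hpow : ∑ b ∈ B, a b * a b ^ s ≤ C * ∑ b ∈ B, e b := by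
    rw [mul_sum]
    exact sum_le_sum fun b hb => by rw [← rpow_one_add' (ha b) (by linarith)]; exact hk b hb
  calc ((∑ b ∈ B, k b * (k b - 1) : ℕ) : ℝ) ^ s ≤ (2 * ∑ b ∈ B, a b * a b) ^ s :=
        rpow_le_rpow (Nat.cast_nonneg _) hpairs (by linarith)
    _ = 2 ^ s * (∑ b ∈ B, a b * a b) ^ s :=
        mul_rpow zero_le_two (sum_nonneg fun b _ => mul_nonneg (ha b) (ha b))
    _ ≤ 2 ^ s * ((∑ b ∈ B, a b) ^ (s - 1) * ∑ b ∈ B, a b * a b ^ s) := by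
        gcongr; exact inner_rpow_le_weight_mul_Lp_of_nonneg B hs ha ha
    _ ≤ 2 ^ s * (((∑ b ∈ B, k b : ℕ) : ℝ) ^ (s - 1) * (C * ∑ b ∈ B, e b)) := by
        gcongr
    _ = _ := by ring

section Directions

variable {E : Type*} [NormedAddCommGroup E] [InnerProductSpace ℝ E]

/-- Ordered pairs of distinct points of `P` on a common line parallel to `ω`. -/
noncomputable def parallelPairs (ω : E) (P : Finset E) : Finset (E × E) :=
  {x ∈ P.offDiag | perpComponent ω x.1 = perpComponent ω x.2}

noncomputable def directions (P : Finset E) : Finset E := P.offDiag.image pairDirection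

lemma norm_eq_one_of_mem_directions {P : Finset E} {ω : E} (hω : ω ∈ directions P) :
    ‖ω‖ = 1 := by
  obtain ⟨x, hx, rfl⟩ := mem_image.1 hω
  exact norm_pairDirection (mem_offDiag.1 hx).2.2

theorem card_parallelPairs_rpow_le {s L : ℝ} (hs : 1 ≤ s) {ω : E} (hω : ‖ω‖ = 1)
    {P : Finset E} (hP : ∀ p ∈ P, ∀ q ∈ P, ‖p - q‖ ≤ L) :
    (#(parallelPairs ω P) : ℝ) ^ s ≤
      2 ^ s * L ^ s * pairEnergy s (parallelPairs ω P) * (#P : ℝ) ^ (s - 1) := by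
  have hcard : #(parallelPairs ω P) = ∑ b ∈ P.image (perpComponent ω),
      #{p ∈ P | perpComponent ω p = b} * (#{p ∈ P | perpComponent ω p = b} - 1) := by
    rw [card_eq_sum_ones, parallelPairs, sum_filter_offDiag_eq_sum_offDiag_fiber]
    simp only [← card_eq_sum_ones, offDiag_card, Nat.mul_sub_one]
  have henergy : pairEnergy s (parallelPairs ω P) =
      ∑ b ∈ P.image (perpComponent ω), pairEnergy s {p ∈ P | perpComponent ω p = b}.offDiag :=
    sum_filter_offDiag_eq_sum_offDiag_fiber P (perpComponent ω) _
  rw [hcard, henergy, card_eq_sum_card_image (perpComponent ω) P]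
  exact sum_mul_sub_one_rpow_le _ _ _ hs fun b _ =>
    card_sub_one_rpow_le_pairEnergy_offDiag_of_perpComponent_eq (by linarith) hω
      (fun p hp q hq => (mem_filter.1 hp).2.trans (mem_filter.1 hq).2.symm)
      (fun p hp q hq => hP p (mem_filter.1 hp).1 q (mem_filter.1 hq).1)

lemma card_offDiag_le_sum_card_parallelPairs (P : Finset E) :
    #P.offDiag ≤ ∑ ω ∈ directions P, #(parallelPairs ω P) := by
  refine (card_le_card fun x hx => ?_).trans card_biUnion_le
  exact mem_biUnion.2 ⟨pairDirection x, mem_image_of_mem _ hx,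
    mem_filter.2 ⟨hx, perpComponent_pairDirection x⟩⟩

lemma sum_pairEnergy_parallelPairs_le (s : ℝ) (P : Finset E) :
    ∑ ω ∈ directions P, pairEnergy s (parallelPairs ω P) ≤ 2 * pairEnergy s P.offDiag := by
  have hmult : ∀ x ∈ P.offDiag,
      #{ω ∈ directions P | perpComponent ω x.1 = perpComponent ω x.2} ≤ 2 := by
    intro x hx
    refine (card_le_card (t := {pairDirection x, pairDirection x.swap}) fun ω hω => ?_).trans
      card_le_two
    obtain ⟨hωD, hωx⟩ := mem_filter.1 hω
    simpa using eq_pairDirection_or_eq_pairDirection_swap (norm_eq_one_of_mem_directions hωD)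
      (mem_offDiag.1 hx).2.2 hωx
  calc ∑ ω ∈ directions P, pairEnergy s (parallelPairs ω P)
      = ∑ x ∈ P.offDiag,
          (#{ω ∈ directions P | perpComponent ω x.1 = perpComponent ω x.2} : ℝ) *
            ‖x.1 - x.2‖ ^ (-s) := by
        simp only [pairEnergy, parallelPairs, sum_filter]
        rw [sum_comm]
        refine sum_congr rfl fun x _ => ?_
        rw [← sum_filter, sum_const, nsmul_eq_mul]
    _ ≤ ∑ x ∈ P.offDiag, 2 * ‖x.1 - x.2‖ ^ (-s) :=
        sum_le_sum fun x hx => mul_le_mul_of_nonneg_right (by exact_mod_cast hmult x hx)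
          (rpow_nonneg (norm_nonneg _) _)
    _ = 2 * pairEnergy s P.offDiag := by rw [pairEnergy, mul_sum]

theorem card_offDiag_rpow_le {s L : ℝ} (hs : 1 ≤ s) (hL : 0 ≤ L) {P : Finset E}
    (hP : ∀ p ∈ P, ∀ q ∈ P, ‖p - q‖ ≤ L) :
    (#P.offDiag : ℝ) ^ s ≤ 2 ^ (s + 1) * L ^ s * (#(directions P) : ℝ) ^ (s - 1) *
      (#P : ℝ) ^ (s - 1) * pairEnergy s P.offDiag := by
  set D := directions P
  set A := 2 ^ s * L ^ s * (#P : ℝ) ^ (s - 1)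
  calc (#P.offDiag : ℝ) ^ s ≤ (∑ ω ∈ D, (#(parallelPairs ω P) : ℝ)) ^ s :=
        rpow_le_rpow (Nat.cast_nonneg _)
          (by exact_mod_cast card_offDiag_le_sum_card_parallelPairs P) (by linarith)
    _ ≤ (#D : ℝ) ^ (s - 1) * ∑ ω ∈ D, (#(parallelPairs ω P) : ℝ) ^ s :=
        rpow_sum_le_const_mul_sum_rpow_of_nonneg D hs fun _ _ => Nat.cast_nonneg _
    _ ≤ (#D : ℝ) ^ (s - 1) * ∑ ω ∈ D, A * pairEnergy s (parallelPairs ω P) := by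
        gcongr with ω hω
        exact (card_parallelPairs_rpow_le hs (norm_eq_one_of_mem_directions hω) hP).trans_eq
          (by ring)
    _ ≤ (#D : ℝ) ^ (s - 1) * (A * (2 * pairEnergy s P.offDiag)) := by
        rw [← mul_sum]
        gcongr
        exact sum_pairEnergy_parallelPairs_le s P
    _ = _ := by rw [rpow_add_one two_ne_zero]; ring

theorem card_le_mul_card_directions {s L K : ℝ} (hs : 1 < s) (hL : 0 ≤ L) {P : Finset E}
    (h2 : 2 ≤ #P) (hP : ∀ p ∈ P, ∀ q ∈ P, ‖p - q‖ ≤ L)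
    (hE : pairEnergy s P.offDiag ≤ K * (#P : ℝ) ^ 2) :
    (#P : ℝ) ≤ (2 ^ (2 * s + 1) * L ^ s * K) ^ (s - 1)⁻¹ * #(directions P) := by
  have hn : (2 : ℝ) ≤ #P := by exact_mod_cast h2
  set n : ℝ := (#P : ℝ)
  set m : ℝ := (#(directions P) : ℝ)
  set X := 2 ^ (2 * s + 1) * L ^ s * K
  have hK : 0 ≤ K := nonneg_of_mul_nonneg_left ((pairEnergy_nonneg s _).trans hE) (by positivity)
  have hpairs : n ^ 2 / 2 ≤ #P.offDiag := by
    rw [offDiag_card, Nat.cast_sub (Nat.le_mul_self _), Nat.cast_mul]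
    nlinarith
  have hcount :
      (n ^ 2 / 2) ^ s ≤ 2 ^ (s + 1) * L ^ s * m ^ (s - 1) * n ^ (s - 1) * (K * n ^ 2) :=
    (rpow_le_rpow (by positivity) hpairs (by linarith)).trans
      ((card_offDiag_rpow_le hs.le hL hP).trans (by gcongr))
  have hpow : n ^ (s - 1) ≤ X * m ^ (s - 1) := by
    have hn0 : 0 < n := by linarith
    have e1 : n ^ (s + 1) * n ^ (s - 1) = 2 ^ s * (n ^ 2 / 2) ^ s := by
      rw [div_rpow (by positivity) zero_le_two, ← rpow_two, ← rpow_mul hn0.le,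
        ← rpow_add hn0, mul_div_cancel₀ _ (by positivity)]
      ring_nf
    have e2 : n ^ (s - 1) * n ^ 2 = n ^ (s + 1) := by
      rw [← rpow_two, ← rpow_add hn0]; ring_nf
    have e3 : (2 : ℝ) ^ s * 2 ^ (s + 1) = 2 ^ (2 * s + 1) := by
      rw [← rpow_add zero_lt_two]; ring_nf
    refine le_of_mul_le_mul_left ?_ (rpow_pos_of_pos hn0 (s + 1))
    calc n ^ (s + 1) * n ^ (s - 1) = 2 ^ s * (n ^ 2 / 2) ^ s := e1
      _ ≤ 2 ^ s * (2 ^ (s + 1) * L ^ s * m ^ (s - 1) * n ^ (s - 1) * (K * n ^ 2)) := by gcongr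
      _ = (2 ^ s * 2 ^ (s + 1)) * L ^ s * K * m ^ (s - 1) * (n ^ (s - 1) * n ^ 2) := by ring
      _ = n ^ (s + 1) * (X * m ^ (s - 1)) := by rw [e2, e3]; ring
  calc n = (n ^ (s - 1)) ^ (s - 1)⁻¹ := (rpow_rpow_inv (by positivity) (by linarith)).symm
    _ ≤ (X * m ^ (s - 1)) ^ (s - 1)⁻¹ :=
        rpow_le_rpow (by positivity) hpow (inv_nonneg.2 (by linarith))
    _ = X ^ (s - 1)⁻¹ * m := by
        rw [mul_rpow (by positivity) (by positivity), rpow_rpow_inv (by positivity) (by linarith)]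

end Directions

lemma norm_sub_le_sqrt_of_mem_unitCube {d : ℕ} {x y : EuclideanSpace ℝ (Fin d)}
    (hx : ∀ i, x i ∈ Set.Icc (0 : ℝ) 1) (hy : ∀ i, y i ∈ Set.Icc (0 : ℝ) 1) : ‖x - y‖ ≤ √d := by
  rw [EuclideanSpace.norm_eq]
  refine sqrt_le_sqrt ((sum_le_sum fun i _ => ?_).trans_eq
    (by simp : ∑ _i : Fin d, (1 : ℝ) = d))
  rw [Real.norm_eq_abs, sq_abs, PiLp.sub_apply]
  nlinarith [(hx i).1, (hx i).2, (hy i).1, (hy i).2]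

lemma sum_sum_ite_ne_eq_sum_offDiag {α M : Type*} [DecidableEq α] [AddCommMonoid M]
    (P : Finset α) (f : α → α → M) :
    ∑ p ∈ P, ∑ q ∈ P, (if p ≠ q then f p q else 0) = ∑ x ∈ P.offDiag, f x.1 x.2 := by
  rw [← sum_product', ← sum_filter]
  congr 1
  ext x
  simp [and_assoc]

lemma directionSet_eq_coe_directions {d : ℕ} (P : Finset (EuclideanSpace ℝ (Fin d))) :
    directionSet (P : Set (EuclideanSpace ℝ (Fin d))) = directions P := by
  ext ω
  simp only [directionSet, directions, pairDirection, coe_image, coe_offDiag, Set.mem_image,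
    Set.mem_offDiag, Prod.exists, mem_coe]
  constructor
  · rintro ⟨x, hx, y, hy, hne, rfl⟩
    exact ⟨x, y, ⟨hx, hy, hne⟩, rfl⟩
  · rintro ⟨x, y, ⟨hx, hy, hne⟩, rfl⟩
    exact ⟨x, hx, y, hy, hne, rfl⟩

theorem directions_of_adaptable_discrete_set (d : ℕ) (hd : 2 ≤ d)
    (s : ℝ) (hs : (d : ℝ) - 1 < s) (K : ℝ) (hK : 0 < K) :
    ∃ c : ℝ, 0 < c ∧
      ∀ (n : ℕ) (P : Finset (EuclideanSpace ℝ (Fin d))), 2 ≤ n → P.card = n →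
        (↑P ⊆ {x : EuclideanSpace ℝ (Fin d) | ∀ i, x i ∈ Set.Icc (0 : ℝ) 1}) →
        (∀ p ∈ P, ∀ q ∈ P, p ≠ q → (n : ℝ) ^ (-(1 : ℝ) / s) ≤ ‖p - q‖) →
        ((n : ℝ) ^ (-(2 : ℤ)) *
            ∑ p ∈ P, ∑ q ∈ P, (if p ≠ q then ‖p - q‖ ^ (-s) else 0) ≤ K) →
        c * (n : ℝ) ^ (((d : ℝ) - 1) / s)
          ≤ ((directionSet (P : Set (EuclideanSpace ℝ (Fin d)))).ncard : ℝ) := by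
  have hs1 : 1 < s := by linarith [show (2 : ℝ) ≤ d by exact_mod_cast hd]
  set C := (2 ^ (2 * s + 1) * √d ^ s * K) ^ (s - 1)⁻¹
  have hC : 0 < C := by positivity
  refine ⟨C⁻¹, inv_pos.2 hC, fun n P hn hcard hcube _ henergy => ?_⟩
  have hE : pairEnergy s P.offDiag ≤ K * (#P : ℝ) ^ 2 := by
    rw [zpow_neg, zpow_ofNat, inv_mul_le_iff₀ (by positivity),
      sum_sum_ite_ne_eq_sum_offDiag P fun p q => ‖p - q‖ ^ (-s)] at henergy
    rwa [pairEnergy, hcard, mul_comm]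
  have hcount := card_le_mul_card_directions hs1 (sqrt_nonneg _) (hcard ▸ hn)
    (fun p hp q hq => norm_sub_le_sqrt_of_mem_unitCube (hcube hp) (hcube hq)) hE
  rw [directionSet_eq_coe_directions, Set.ncard_coe_finset, ← hcard]
  calc C⁻¹ * (#P : ℝ) ^ (((d : ℝ) - 1) / s) ≤ C⁻¹ * #P := by
        gcongr
        exact rpow_le_self_of_one_le (by exact_mod_cast (by omega : 1 ≤ #P))
          ((div_le_one (by linarith)).2 (by linarith))
    _ ≤ #(directions P) := by rwa [inv_mul_le_iff₀ hC]
end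

section
/- Let m ≥ 1, let ν be a finite Borel measure on ℝ^m, and let c₀ > 0. Define the restricted maximal function ν_*(t) = sup_{0 < ε < c₀} ν(B(t,ε)) / ℒ^m(B(t,ε)), where ℒ^m is Lebesgue measure on ℝ^m and B(t,ε) is the ball of radius ε centered at t. If ν_* is Lebesgue-integrable on ℝ^m, then ν is absolutely continuous with respect to ℒ^m, and its Radon–Nikodym derivative f = dν/dℒ^m satisfies ∫_{ℝ^m} f dℒ^m = ν(ℝ^m); in particular, if ν ≠ 0 then the set {t : f(t) > 0} has positive Lebesgue measure. -/
/-!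
By Fubini and translation invariance, `∫ ν(B̄(t,r)) / μ(B̄(t,r)) dμ(t) = ν(ℝ^m)` for every radius
`r > 0`. For `r < c₀/2` these ratios are dominated by `2^m ν_*`, which is integrable, and by
Besicovitch's differentiation theorem they tend a.e. to `dν/dμ` as `r → 0`. Fatou's lemma then
gives `ν(ℝ^m) ≤ ∫ dν/dμ dμ`, so the singular part of `ν` has zero mass.
-/

open MeasureTheory Metric Filter Module
open scoped ENNReal Topology

theorem ENNReal.div_le_mul_div {a a' b b' K : ℝ≥0∞} (hK₀ : K ≠ 0) (hK : K ≠ ∞) (ha : a ≤ a')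
    (hb : b' ≤ K * b) : a / b ≤ K * (a' / b') :=
  calc a / b ≤ a' / b := ENNReal.div_le_div_right ha b
    _ = K * a' / (K * b) := (ENNReal.mul_div_mul_left a' b hK₀ hK).symm
    _ ≤ K * a' / b' := ENNReal.div_le_div_left hb _
    _ = K * (a' / b') := mul_div_assoc _ _ _

/-- The paper's `ν_*`, taken in `ℝ≥0∞` so that an unbounded supremum is `∞` rather than the junk
value `0` of a real `⨆`. -/
noncomputable def restrictedMaximal {α : Type*} [PseudoMetricSpace α] [MeasurableSpace α]
    (μ ν : Measure α) (c : ℝ) (t : α) : ℝ≥0∞ :=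
  ⨆ ε ∈ Set.Ioo 0 c, ν (ball t ε) / μ (ball t ε)

section MetricSpace

variable {α : Type*} [PseudoMetricSpace α] [MeasurableSpace α]

theorem toReal_restrictedMaximal {μ ν : Measure α} {c : ℝ} {t : α}
    (h : restrictedMaximal μ ν c t ≠ ∞) :
    (restrictedMaximal μ ν c t).toReal =
      ⨆ ε ∈ Set.Ioo 0 c, (ν (ball t ε)).toReal / (μ (ball t ε)).toReal := by
  have hle : ∀ ε ∈ Set.Ioo 0 c, ν (ball t ε) / μ (ball t ε) ≤ restrictedMaximal μ ν c t :=
    fun ε hε => le_iSup₂ (f := fun ε _ => ν (ball t ε) / μ (ball t ε)) ε hε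
  rw [restrictedMaximal, ENNReal.toReal_iSup fun ε => ne_top_of_le_ne_top h (iSup_le (hle ε))]
  refine iSup_congr fun ε => ?_
  rw [ENNReal.toReal_iSup fun hε => ne_top_of_le_ne_top h (hle ε hε)]
  simp only [ENNReal.toReal_div]

variable [OpensMeasurableSpace α] [SecondCountableTopology α]

theorem measurableSet_dist_le (r : ℝ) : MeasurableSet {p : α × α | dist p.2 p.1 ≤ r} :=
  (isClosed_le (continuous_snd.dist continuous_fst) continuous_const).measurableSet

theorem measurable_measure_closedBall (ν : Measure α) [SFinite ν] (r : ℝ) :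
    Measurable fun t => ν (closedBall t r) :=
  measurable_measure_prodMk_left (measurableSet_dist_le r)

end MetricSpace

section AddHaar

variable {E : Type*} [NormedAddCommGroup E] [NormedSpace ℝ E] [FiniteDimensional ℝ E]
  [MeasurableSpace E] [BorelSpace E] (μ : Measure E) [μ.IsAddHaarMeasure]

theorem addHaar_ball_two_mul (x : E) (r : ℝ) :
    μ (ball x (2 * r)) = 2 ^ finrank ℝ E * μ (ball x r) := by
  rw [Measure.addHaar_ball_mul_of_pos μ x two_pos, Measure.addHaar_ball_center μ x r,
    ENNReal.ofReal_pow zero_le_two, ENNReal.ofReal_ofNat]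

variable (ν : Measure E)

theorem measure_closedBall_div_le (t : E) {r : ℝ} (hr : 0 < r) :
    ν (closedBall t r) / μ (closedBall t r) ≤
      2 ^ finrank ℝ E * (ν (ball t (2 * r)) / μ (ball t (2 * r))) :=
  ENNReal.div_le_mul_div (by simp) (by simp)
    (measure_mono (closedBall_subset_ball (by linarith)))
    ((addHaar_ball_two_mul μ t r).trans_le (by gcongr; exact ball_subset_closedBall))

theorem measure_ball_div_le (t : E) {r : ℝ} (hr : 0 < r) :
    ν (ball t r) / μ (ball t r) ≤ 2 ^ finrank ℝ E * (ν (closedBall t r) / μ (closedBall t r)) :=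
  ENNReal.div_le_mul_div (by simp) (by simp) (measure_mono ball_subset_closedBall)
    ((measure_mono (closedBall_subset_ball (by linarith))).trans
      (addHaar_ball_two_mul μ t r).le)

/-- At a point where the closed-ball ratios have a finite limit, the small radii are controlled
by that limit and the large ones by `ν univ / μ (ball t u)`. -/
theorem restrictedMaximal_lt_top [IsFiniteMeasure ν] (c : ℝ) {t : E} {L : ℝ≥0∞} (hL : L ≠ ∞)
    (ht : Tendsto (fun r => ν (closedBall t r) / μ (closedBall t r)) (𝓝[>] 0) (𝓝 L)) :
    restrictedMaximal μ ν c t < ∞ := by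
  obtain ⟨u, hu, hsmall⟩ := mem_nhdsGT_iff_exists_Ioc_subset.1
    (ht (Iio_mem_nhds (ENNReal.lt_add_right hL one_ne_zero)))
  have hbound : ∀ ε ∈ Set.Ioo 0 c, ν (ball t ε) / μ (ball t ε) ≤
      max (2 ^ finrank ℝ E * (L + 1)) (ν Set.univ / μ (ball t u)) := by
    intro ε hε
    rcases le_or_gt ε u with hεu | hεu
    · refine le_max_of_le_left ((measure_ball_div_le μ ν t hε.1).trans ?_)
      gcongr
      exact (hsmall ⟨hε.1, hεu⟩).le
    · exact le_max_of_le_right (ENNReal.div_le_div (measure_mono (Set.subset_univ _))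
        (measure_mono (ball_subset_ball hεu.le)))
  refine (iSup₂_le hbound).trans_lt (max_lt ?_ ?_)
  · exact ENNReal.mul_lt_top (by simp) (by simpa [lt_top_iff_ne_top] using hL)
  · exact ENNReal.div_lt_top (measure_ne_top ν _) (measure_ball_pos μ t hu).ne'

theorem lintegral_measure_closedBall [SFinite ν] (r : ℝ) :
    ∫⁻ t, ν (closedBall t r) ∂μ = μ (closedBall 0 r) * ν Set.univ :=
  calc ∫⁻ t, ν (closedBall t r) ∂μ = (μ.prod ν) {p : E × E | dist p.2 p.1 ≤ r} :=
        (Measure.prod_apply (measurableSet_dist_le r)).symm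
    _ = ∫⁻ x, μ (closedBall x r) ∂ν := by
        rw [Measure.prod_apply_symm (measurableSet_dist_le r)]
        refine lintegral_congr fun x => congr_arg μ ?_
        ext y
        simp [dist_comm]
    _ = μ (closedBall 0 r) * ν Set.univ := by
        simp only [Measure.addHaar_closedBall_center μ _ r, lintegral_const]

theorem lintegral_measure_closedBall_div [SFinite ν] {r : ℝ} (hr : 0 < r) :
    ∫⁻ t, ν (closedBall t r) / μ (closedBall t r) ∂μ = ν Set.univ := by
  have h₀ : μ (closedBall (0 : E) r) ≠ 0 := (measure_closedBall_pos μ 0 hr).ne'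
  have hfin : μ (closedBall (0 : E) r) ≠ ∞ := measure_closedBall_lt_top.ne
  simp only [Measure.addHaar_closedBall_center μ _ r, div_eq_mul_inv]
  rw [lintegral_mul_const _ (measurable_measure_closedBall ν r), lintegral_measure_closedBall,
    mul_comm (μ _), mul_assoc, ENNReal.mul_inv_cancel h₀ hfin, mul_one]

end AddHaar

section RadonNikodym

variable {α : Type*} [MeasurableSpace α] {μ ν : Measure α}

theorem absolutelyContinuous_of_measure_univ_le_lintegral_rnDeriv [IsFiniteMeasure ν]
    [ν.HaveLebesgueDecomposition μ] (h : ν Set.univ ≤ ∫⁻ t, ν.rnDeriv μ t ∂μ) : ν ≪ μ := by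
  have hdec : ν.singularPart μ Set.univ + ∫⁻ t, ν.rnDeriv μ t ∂μ = ν Set.univ := by
    conv_rhs => rw [← Measure.singularPart_add_rnDeriv ν μ]
    rw [Measure.add_apply, withDensity_apply _ MeasurableSet.univ, setLIntegral_univ]
  have hfin : ∫⁻ t, ν.rnDeriv μ t ∂μ ≠ ∞ :=
    ne_top_of_le_ne_top (measure_ne_top ν _) Measure.lintegral_rnDeriv_le
  have hsing : ν.singularPart μ Set.univ = 0 := by
    rw [← nonpos_iff_eq_zero, ← ENNReal.add_le_add_iff_right hfin, hdec, zero_add]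
    exact h
  exact (Measure.singularPart_eq_zero ν μ).1 (Measure.measure_univ_eq_zero.1 hsing)

theorem measure_setOf_rnDeriv_pos_pos [ν.HaveLebesgueDecomposition μ] (hac : ν ≪ μ)
    (hν : ν ≠ 0) : 0 < μ {t | 0 < ν.rnDeriv μ t} := by
  refine pos_iff_ne_zero.2 fun h => hν (ae_eq_bot.1 (eventually_false_iff_eq_bot.1 ?_))
  filter_upwards [Measure.rnDeriv_pos hac, hac.ae_le (measure_eq_zero_iff_ae_notMem.1 h)]
    with t hpos hnpos using hnpos hpos

end RadonNikodym

section Maximal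

variable {E : Type*} [NormedAddCommGroup E] [NormedSpace ℝ E] [FiniteDimensional ℝ E]
  [MeasurableSpace E] [BorelSpace E] {μ : Measure E} [μ.IsAddHaarMeasure]
  {ν : Measure E} [IsFiniteMeasure ν] {c : ℝ}

/-- Fatou's lemma, dominated by `2 ^ d ν_*`, applied to the closed-ball ratios, whose integrals
all equal `ν univ` and which converge a.e. to `dν/dμ` by Besicovitch's differentiation theorem. -/
theorem measure_univ_le_lintegral_rnDeriv (hc : 0 < c)
    (hint : ∫⁻ t, restrictedMaximal μ ν c t ∂μ ≠ ∞) :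
    ν Set.univ ≤ ∫⁻ t, ν.rnDeriv μ t ∂μ := by
  obtain ⟨r, -, hr, hr0⟩ := exists_seq_strictAnti_tendsto' (half_pos hc)
  have hr' : Tendsto r atTop (𝓝[>] 0) :=
    tendsto_nhdsWithin_of_tendsto_nhds_of_eventually_within _ hr0
      (Eventually.of_forall fun n => (hr n).1)
  set ratio : ℕ → E → ℝ≥0∞ := fun n t => ν (closedBall t (r n)) / μ (closedBall t (r n))
  have hdom : ∀ n t, ratio n t ≤ 2 ^ finrank ℝ E * restrictedMaximal μ ν c t := by
    intro n t
    refine (measure_closedBall_div_le μ ν t (hr n).1).trans ?_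
    gcongr
    exact le_iSup₂ (f := fun ε _ => ν (ball t ε) / μ (ball t ε)) (2 * r n)
      ⟨by linarith [(hr n).1], by linarith [(hr n).2]⟩
  have hmeas : ∀ n, Measurable (ratio n) := fun n => by
    simp only [ratio, Measure.addHaar_closedBall_center μ _ (r n)]
    exact (measurable_measure_closedBall ν _).div_const _
  calc ν Set.univ = limsup (fun n => ∫⁻ t, ratio n t ∂μ) atTop := by
        simp only [ratio, lintegral_measure_closedBall_div μ ν (hr _).1, limsup_const]
    _ ≤ ∫⁻ t, limsup (fun n => ratio n t) atTop ∂μ :=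
        limsup_lintegral_le _ hmeas (fun n => ae_of_all _ (hdom n))
          (by rw [lintegral_const_mul' _ _ (by simp)]; exact ENNReal.mul_ne_top (by simp) hint)
    _ = ∫⁻ t, ν.rnDeriv μ t ∂μ := by
        refine lintegral_congr_ae ?_
        filter_upwards [Besicovitch.ae_tendsto_rnDeriv ν μ] with t ht
        exact (ht.comp hr').limsup_eq

theorem lintegral_restrictedMaximal_ne_top
    (hint : Integrable (fun t => ⨆ ε ∈ Set.Ioo 0 c,
      (ν (ball t ε)).toReal / (μ (ball t ε)).toReal) μ) :
    ∫⁻ t, restrictedMaximal μ ν c t ∂μ ≠ ∞ := by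
  refine ne_of_eq_of_ne (lintegral_congr_ae ?_) hint.lintegral_lt_top.ne
  filter_upwards [Besicovitch.ae_tendsto_rnDeriv ν μ, Measure.rnDeriv_lt_top ν μ] with t ht hfin
  have hne := (restrictedMaximal_lt_top μ ν c hfin.ne ht).ne
  rw [← toReal_restrictedMaximal hne, ENNReal.ofReal_toReal hne]

end Maximal

theorem maximal_integrable_implies_ac_general (m : ℕ)
    (ν : Measure (EuclideanSpace ℝ (Fin m))) [IsFiniteMeasure ν]
    (c₀ : ℝ) (hc₀ : 0 < c₀)
    (hint : Integrable
      (fun t : EuclideanSpace ℝ (Fin m) =>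
        ⨆ ε ∈ Set.Ioo (0 : ℝ) c₀,
          (ν (ball t ε)).toReal / (volume (ball t ε)).toReal)
      volume) :
    ν ≪ volume ∧
    (∫ t, (ν.rnDeriv volume t).toReal ∂volume) = (ν Set.univ).toReal ∧
    (ν ≠ 0 → 0 < volume {t : EuclideanSpace ℝ (Fin m) | 0 < ν.rnDeriv volume t}) := by
  have hac : ν ≪ volume := absolutelyContinuous_of_measure_univ_le_lintegral_rnDeriv
    (measure_univ_le_lintegral_rnDeriv hc₀ (lintegral_restrictedMaximal_ne_top hint))
  exact ⟨hac, Measure.integral_toReal_rnDeriv hac, measure_setOf_rnDeriv_pos_pos hac⟩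

theorem maximal_integrable_implies_ac (m : ℕ) (hm : 1 ≤ m)
    (ν : Measure (EuclideanSpace ℝ (Fin m))) [IsFiniteMeasure ν]
    (c₀ : ℝ) (hc₀ : 0 < c₀)
    (hint : Integrable
      (fun t : EuclideanSpace ℝ (Fin m) =>
        ⨆ ε ∈ Set.Ioo (0 : ℝ) c₀,
          (ν (ball t ε)).toReal / (volume (ball t ε)).toReal)
      volume) :
    ν ≪ volume ∧
    (∫ t, (ν.rnDeriv volume t).toReal ∂volume) = (ν Set.univ).toReal ∧
    (ν ≠ 0 → 0 < volume {t : EuclideanSpace ℝ (Fin m) | 0 < ν.rnDeriv volume t}) :=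
  maximal_integrable_implies_ac_general m ν c₀ hc₀ hint
end
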